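/- If β₀, β₁, β₂ are positive reals with βₖ = β(1 + O(Δx²)) for some common β > 0 (i.e., |βₖ − β| ≤ CβΔx² ), and ωₖ = αₖ/Σαₗ with αₖ = dₖ/(ε+βₖ)² where d₀+d₁+d₂ = 1, dₖ > 0, ε ≥ 0 and ε+β > 0, then ωₖ = dₖ + O(Δx²). -/
import Mathlib
set_option maxHeartbeats 800000

lemma weno_key (C Δx A d0 d1 d2 p0 p1 p2 : ℝ)
    (hC : 0 < C) (hΔ : 0 < Δx) (hsmall : C*Δx^2 ≤ 1/24) (hA : 0 < A)
    (hd0 : 0 < d0) (hd1 : 0 < d1) (hd2 : 0 < d2) (hsum : d0 + d1 + d2 = 1)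
    (h0 : |p0 - A^2| ≤ 3*A^2*(C*Δx^2))
    (h1 : |p1 - A^2| ≤ 3*A^2*(C*Δx^2))
    (h2 : |p2 - A^2| ≤ 3*A^2*(C*Δx^2)) :
    |d0/p0/(d0/p0 + d1/p1 + d2/p2) - d0| ≤ 192*C*Δx^2 := by
  have hA2 : 0 < A^2 := by positivity
  have hcd : (0:ℝ) ≤ C*Δx^2 := by positivity
  have h3 : 3*A^2*(C*Δx^2) ≤ A^2/8 := by nlinarith
  obtain ⟨h0l, h0u⟩ := abs_le.mp h0
  obtain ⟨h1l, h1u⟩ := abs_le.mp h1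
  obtain ⟨h2l, h2u⟩ := abs_le.mp h2
  have hp0l : 7/8*A^2 ≤ p0 := by linarith
  have hp0u : p0 ≤ 9/8*A^2 := by linarith
  have hp1l : 7/8*A^2 ≤ p1 := by linarith
  have hp1u : p1 ≤ 9/8*A^2 := by linarith
  have hp2l : 7/8*A^2 ≤ p2 := by linarith
  have hp2u : p2 ≤ 9/8*A^2 := by linarith
  have hp0 : 0 < p0 := by linarith
  have hp1 : 0 < p1 := by linarith
  have hp2 : 0 < p2 := by linarith
  set T := d0*(p1*p2) + d1*(p0*p2) + d2*(p0*p1) with hTdef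
  have ha : (0:ℝ) ≤ 7/8*A^2 := by positivity
  have hpp : ∀ x y : ℝ, 7/8*A^2 ≤ x → 7/8*A^2 ≤ y → 49/64*A^4 ≤ x*y := by
    intro x y hx hy
    nlinarith [mul_nonneg (by linarith : (0:ℝ) ≤ x - 7/8*A^2) (by linarith : (0:ℝ) ≤ y - 7/8*A^2),
      mul_le_mul_of_nonneg_left hx ha, mul_le_mul_of_nonneg_left hy ha]
  have hpp12 : 49/64*A^4 ≤ p1*p2 := hpp _ _ hp1l hp2l
  have hpp02 : 49/64*A^4 ≤ p0*p2 := hpp _ _ hp0l hp2l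
  have hpp01 : 49/64*A^4 ≤ p0*p1 := hpp _ _ hp0l hp1l
  have hT : 49/64*A^4 ≤ T := by
    have t0 := mul_le_mul_of_nonneg_left hpp12 hd0.le
    have t1 := mul_le_mul_of_nonneg_left hpp02 hd1.le
    have t2 := mul_le_mul_of_nonneg_left hpp01 hd2.le
    have e : d0*(49/64*A^4) + d1*(49/64*A^4) + d2*(49/64*A^4) = 49/64*A^4 := by
      linear_combination (49/64*A^4) * hsum
    linarith
  have hTpos : 0 < T := by positivity
  have e : d0/p0/(d0/p0 + d1/p1 + d2/p2) = d0*(p1*p2)/T := by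
    have hS : d0/p0 + d1/p1 + d2/p2 = T/(p0*(p1*p2)) := by
      field_simp [hp0.ne', hp1.ne', hp2.ne']; ring
    rw [hS]
    field_simp [hp0.ne', hp1.ne', hp2.ne', hTpos.ne']
  rw [e]
  have e2 : d0*(p1*p2)/T - d0 = (d0*(p1*p2) - d0*T)/T := by
    field_simp
  rw [e2, abs_div, abs_of_pos hTpos, div_le_iff₀ hTpos]
  have hd2e : d2 = 1 - d0 - d1 := by linarith
  have eN : d0*(p1*p2) - d0*T = d0*d1*p2*(p1-p0) + d0*d2*p1*(p2-p0) := by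
    rw [hTdef, hd2e]; ring
  rw [eN]
  have k1 : |p1 - p0| ≤ 6*A^2*(C*Δx^2) := by
    calc |p1 - p0| ≤ |p1 - A^2| + |A^2 - p0| := abs_sub_le _ _ _
      _ = |p1 - A^2| + |p0 - A^2| := by rw [abs_sub_comm (A^2) p0]
      _ ≤ 6*A^2*(C*Δx^2) := by linarith
  have k2 : |p2 - p0| ≤ 6*A^2*(C*Δx^2) := by
    calc |p2 - p0| ≤ |p2 - A^2| + |A^2 - p0| := abs_sub_le _ _ _
      _ = |p2 - A^2| + |p0 - A^2| := by rw [abs_sub_comm (A^2) p0]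
      _ ≤ 6*A^2*(C*Δx^2) := by linarith
  have b1 : |d0*d1*p2*(p1-p0)| ≤ d0*d1*(9/8*A^2)*(6*A^2*(C*Δx^2)) := by
    rw [abs_mul, abs_of_pos (by positivity : (0:ℝ) < d0*d1*p2)]
    gcongr
  have b2 : |d0*d2*p1*(p2-p0)| ≤ d0*d2*(9/8*A^2)*(6*A^2*(C*Δx^2)) := by
    rw [abs_mul, abs_of_pos (by positivity : (0:ℝ) < d0*d2*p1)]
    gcongr
  have habs := abs_add_le (d0*d1*p2*(p1-p0)) (d0*d2*p1*(p2-p0))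
  have hdd : d0*d1 + d0*d2 ≤ 1 := by nlinarith
  have hA4cd : (0:ℝ) ≤ A^4*(C*Δx^2) := by positivity
  have hrhs : 192*C*Δx^2*(49/64*A^4) ≤ 192*C*Δx^2*T := by
    have : (0:ℝ) ≤ 192*C*Δx^2 := by positivity
    exact mul_le_mul_of_nonneg_left hT this
  nlinarith [mul_le_mul_of_nonneg_right hdd hA4cd]

theorem weno_weights_convergence (ε C : ℝ) (d : Fin 3 → ℝ)
    (hd : ∀ k, 0 < d k) (hdsum : d 0 + d 1 + d 2 = 1) (hε : 0 ≤ ε) (hC : 0 < C) :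
    ∃ C' > (0:ℝ), ∃ δ > (0:ℝ), ∀ Δx β : ℝ, ∀ b : Fin 3 → ℝ,
      0 < Δx → Δx < δ → 0 < β → 0 < ε + β → (∀ k, 0 < b k) →
      (∀ k, |b k - β| ≤ C * β * Δx^2) →
      ∀ k, |(d k / (ε + b k)^2) /
              ((d 0 / (ε + b 0)^2) + (d 1 / (ε + b 1)^2) + (d 2 / (ε + b 2)^2))
            - d k| ≤ C' * Δx^2 := by
  refine ⟨192*C, by positivity, Real.sqrt (1/(24*C)), Real.sqrt_pos.mpr (by positivity), ?_⟩
  intro Δx β b hΔx hδ hβ hεβ hb hβb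
  have hsq : Δx^2 < 1/(24*C) := by
    have hs := Real.sq_sqrt (show (0:ℝ) ≤ 1/(24*C) by positivity)
    nlinarith [Real.sqrt_nonneg (1/(24*C))]
  have hsmall : C*Δx^2 ≤ 1/24 := by
    rw [lt_div_iff₀ (by positivity : (0:ℝ) < 24*C)] at hsq
    nlinarith
  have hA : 0 < ε + β := hεβ
  have hp : ∀ k, |(ε + b k)^2 - (ε+β)^2| ≤ 3*(ε+β)^2*(C*Δx^2) := by
    intro k
    obtain ⟨hbl, hbu⟩ := abs_le.mp (hβb k)
    have h1 : |(ε + b k) - (ε+β)| ≤ C*Δx^2*(ε+β) := by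
      have he : (ε + b k) - (ε + β) = b k - β := by ring
      rw [he]
      calc |b k - β| ≤ C*β*Δx^2 := hβb k
        _ ≤ C*Δx^2*(ε+β) := by nlinarith
    have h2 : (ε + b k) + (ε + β) ≤ 3*(ε+β) := by nlinarith
    have e : (ε + b k)^2 - (ε+β)^2 = ((ε+b k) - (ε+β))*((ε+b k)+(ε+β)) := by ring
    have hupos : 0 < (ε + b k) + (ε + β) := by have := hb k; linarith
    rw [e, abs_mul, abs_of_pos hupos]
    calc |(ε+b k) - (ε+β)| * ((ε+b k)+(ε+β)) ≤ (C*Δx^2*(ε+β)) * (3*(ε+β)) :=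
          mul_le_mul h1 h2 hupos.le (by positivity)
      _ = 3*(ε+β)^2*(C*Δx^2) := by ring
  intro k
  fin_cases k
  · exact weno_key C Δx (ε+β) (d 0) (d 1) (d 2) ((ε+b 0)^2) ((ε+b 1)^2) ((ε+b 2)^2)
      hC hΔx hsmall hA (hd 0) (hd 1) (hd 2) hdsum (hp 0) (hp 1) (hp 2)
  · rw [show (d 0/(ε+b 0)^2 + d 1/(ε+b 1)^2 + d 2/(ε+b 2)^2)
        = d 1/(ε+b 1)^2 + d 0/(ε+b 0)^2 + d 2/(ε+b 2)^2 from by ring]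
    exact weno_key C Δx (ε+β) (d 1) (d 0) (d 2) ((ε+b 1)^2) ((ε+b 0)^2) ((ε+b 2)^2)
      hC hΔx hsmall hA (hd 1) (hd 0) (hd 2) (by linarith) (hp 1) (hp 0) (hp 2)
  · rw [show (d 0/(ε+b 0)^2 + d 1/(ε+b 1)^2 + d 2/(ε+b 2)^2)
        = d 2/(ε+b 2)^2 + d 0/(ε+b 0)^2 + d 1/(ε+b 1)^2 from by ring]
    exact weno_key C Δx (ε+β) (d 2) (d 0) (d 1) ((ε+b 2)^2) ((ε+b 0)^2) ((ε+b 1)^2)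
      hC hΔx hsmall hA (hd 2) (hd 0) (hd 1) (by linarith) (hp 2) (hp 0) (hp 1)
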